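/- arXiv:1007.3376 — 5 statements merged into one kernel-verified Lean document; each statement's English description precedes it below -/
import Mathlib

section
/- The monotone rearrangement operator is a contraction in L^p: for bounded measurable functions f₁, f₂ on a bounded interval J and any p ≥ 1, ∫_J |Φ(f₁)(u) − Φ(f₂)(u)|^p du ≤ ∫_J |f₁(u) − f₂(u)|^p du. -/
/-!
For `p ≥ 1` the cost `(x - y)₊ ^ p` is a mixture of quadrant indicators: it equals
`ρ {(s, t) | y ≤ s, t < x}` for a measure `ρ` carried by `{s ≤ t}` (Lebesgue measure on the
diagonal if `p = 1`, density `p (p - 1) (t - s) ^ (p - 2)` if `p > 1`). By Tonelli,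
`∫ (g₁ - g₂)₊ ^ p` is then the `ρ`-integral of the measures of the events `{t < g₁, g₂ ≤ s}`, so
it suffices that rearranging does not enlarge any of them. For `Φ` this holds because
`{t < Φ f₁, Φ f₂ ≤ s}` lies in the interval `[a + Ψ f₁ t, a + Ψ f₂ s]`, whose length
`|{f₂ ≤ s}| - |{f₁ ≤ t}|` is at most `|{t < f₁, f₂ ≤ s}|`.
-/

open MeasureTheory

/-- `Ψ(f)(y) = ∫_{[a,b]} 1{f(u) ≤ y} du`. -/
noncomputable def Psi (a b : ℝ) (f : ℝ → ℝ) (y : ℝ) : ℝ :=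
  ∫ u in Set.Icc a b, Set.indicator {v : ℝ | f v ≤ y} (fun _ => (1 : ℝ)) u

/-- The increasing rearrangement `Φ(f)(u) = (Ψ f)⁻¹(u) = sup {y : Ψ(f)(y) ≤ u - a}`. -/
noncomputable def Phi (a b : ℝ) (f : ℝ → ℝ) (u : ℝ) : ℝ :=
  sSup {y : ℝ | Psi a b f y ≤ u - a}

open Set

theorem setLIntegral_Ico_rpow_sub_right {r : ℝ} (hr : -1 < r) {c d : ℝ} (hcd : c ≤ d) :
    ∫⁻ t in Ico c d, ENNReal.ofReal ((t - c) ^ r)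
      = ENNReal.ofReal ((d - c) ^ (r + 1) / (r + 1)) := by
  have hint : IntegrableOn (fun t => (t - c) ^ r) (Ioc c d) := by
    rw [← intervalIntegrable_iff_integrableOn_Ioc_of_le hcd]
    simpa using
      (intervalIntegral.intervalIntegrable_rpow' hr (a := 0) (b := d - c)).comp_sub_right c
  have hnn : 0 ≤ᵐ[volume.restrict (Ioc c d)] fun t => (t - c) ^ r :=
    (ae_restrict_iff' measurableSet_Ioc).mpr <| .of_forall fun t ht =>
      Real.rpow_nonneg (sub_nonneg.mpr ht.1.le) r
  rw [Measure.restrict_congr_set Ico_ae_eq_Ioc, ← ofReal_integral_eq_lintegral_ofReal hint hnn,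
    ← intervalIntegral.integral_of_le hcd, intervalIntegral.integral_comp_sub_right (· ^ r),
    sub_self, integral_rpow (.inl hr), Real.zero_rpow (by linarith), sub_zero]

theorem setLIntegral_Ico_rpow_sub_left {r : ℝ} (hr : -1 < r) {c d : ℝ} (hcd : c ≤ d) :
    ∫⁻ t in Ico c d, ENNReal.ofReal ((d - t) ^ r)
      = ENNReal.ofReal ((d - c) ^ (r + 1) / (r + 1)) := by
  have hint : IntegrableOn (fun t => (d - t) ^ r) (Ioc c d) := by
    rw [← intervalIntegrable_iff_integrableOn_Ioc_of_le hcd]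
    simpa using
      (intervalIntegral.intervalIntegrable_rpow' hr (a := d - c) (b := 0)).comp_sub_left d
  have hnn : 0 ≤ᵐ[volume.restrict (Ioc c d)] fun t => (d - t) ^ r :=
    (ae_restrict_iff' measurableSet_Ioc).mpr <| .of_forall fun t ht =>
      Real.rpow_nonneg (sub_nonneg.mpr ht.2) r
  rw [Measure.restrict_congr_set Ico_ae_eq_Ioc, ← ofReal_integral_eq_lintegral_ofReal hint hnn,
    ← intervalIntegral.integral_of_le hcd, intervalIntegral.integral_comp_sub_left (· ^ r),
    sub_self, integral_rpow (.inl hr), Real.zero_rpow (by linarith), sub_zero]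

theorem lintegral_indicator_rpow_kernel_slice {p : ℝ} (hp : 1 < p) (x y s : ℝ) :
    ∫⁻ t, (Ici y ×ˢ Iio x ∩ {z | z.1 ≤ z.2}).indicator
        (fun z => ENNReal.ofReal (p * (p - 1) * (z.2 - z.1) ^ (p - 2))) (s, t)
      = (Ico y x).indicator (fun s => ENNReal.ofReal (p * (x - s) ^ (p - 1))) s := by
  by_cases hs : s ∈ Ico y x
  · have hslice : ∀ t, (Ici y ×ˢ Iio x ∩ {z | z.1 ≤ z.2}).indicator
        (fun z => ENNReal.ofReal (p * (p - 1) * (z.2 - z.1) ^ (p - 2))) (s, t)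
          = (Ico s x).indicator (fun t => ENNReal.ofReal (p * (p - 1))
              * ENNReal.ofReal ((t - s) ^ (p - 2))) t := by
      intro t
      simp only [indicator_apply, mem_inter_iff, mem_prod, mem_Ici, mem_Iio, mem_Ico, hs.1,
        true_and, mem_ofPred_eq, and_comm (a := t < x)]
      rw [ENNReal.ofReal_mul (by nlinarith)]
    rw [lintegral_congr hslice, lintegral_indicator measurableSet_Ico, lintegral_const_mul' _ _
      ENNReal.ofReal_ne_top, setLIntegral_Ico_rpow_sub_right (by linarith) hs.2.le,
      indicator_of_mem hs, ← ENNReal.ofReal_mul (by nlinarith)]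
    congr 1
    rw [show p - 2 + 1 = p - 1 by ring]
    field_simp [show p - 1 ≠ 0 by linarith]
  · rw [indicator_of_notMem hs, ← lintegral_zero]
    refine lintegral_congr fun t => indicator_of_notMem ?_ _
    rintro ⟨⟨hys, htx⟩, hst⟩
    exact hs ⟨hys, hst.trans_lt htx⟩

theorem exists_measure_eq_posPart_rpow {p : ℝ} (hp : 1 ≤ p) :
    ∃ ρ : Measure (ℝ × ℝ), SFinite ρ ∧ ∀ x y : ℝ,
      ρ (Ici y ×ˢ Iio x) = ENNReal.ofReal (max (x - y) 0 ^ p) := by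
  have hmeas : ∀ x y : ℝ, MeasurableSet (Ici y ×ˢ Iio x) :=
    fun _ _ => measurableSet_Ici.prod measurableSet_Iio
  rcases hp.eq_or_lt with rfl | hp
  · refine ⟨volume.map fun s => (s, s), inferInstance, fun x y => ?_⟩
    have hdiag : (fun s : ℝ => (s, s)) ⁻¹' (Ici y ×ˢ Iio x) = Ico y x := rfl
    rw [Measure.map_apply (by fun_prop) (hmeas x y), hdiag, Real.volume_Ico, Real.rpow_one]
    rcases le_total y x with h | h
    · rw [max_eq_left (by linarith)]
    · rw [max_eq_right (by linarith), ENNReal.ofReal_of_nonpos (by linarith), ENNReal.ofReal_zero]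
  · set k : ℝ × ℝ → ENNReal := fun z => ENNReal.ofReal (p * (p - 1) * (z.2 - z.1) ^ (p - 2))
    refine ⟨(volume.restrict {z | z.1 ≤ z.2}).withDensity k, inferInstance, fun x y => ?_⟩
    have hD : MeasurableSet {z : ℝ × ℝ | z.1 ≤ z.2} := measurableSet_le (by fun_prop) (by fun_prop)
    rw [withDensity_apply _ (hmeas x y), Measure.restrict_restrict (hmeas x y),
      ← lintegral_indicator ((hmeas x y).inter hD), Measure.volume_eq_prod,
      lintegral_prod _ ((Measurable.ennreal_ofReal (by fun_prop)).indicator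
        ((hmeas x y).inter hD)).aemeasurable]
    simp_rw [lintegral_indicator_rpow_kernel_slice hp]
    rw [lintegral_indicator measurableSet_Ico]
    rcases le_total y x with h | h
    · simp_rw [ENNReal.ofReal_mul (by linarith : 0 ≤ p)]
      rw [lintegral_const_mul' _ _ ENNReal.ofReal_ne_top,
        setLIntegral_Ico_rpow_sub_left (by linarith) h, ← ENNReal.ofReal_mul (by linarith),
        max_eq_left (by linarith), sub_add_cancel]
      congr 1
      field_simp
    · rw [Ico_eq_empty (by linarith), Measure.restrict_empty, lintegral_zero_measure,
        max_eq_right (by linarith), Real.zero_rpow (by linarith), ENNReal.ofReal_zero]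

theorem lintegral_measure_Ici_prod_Iio_eq (ρ ν : Measure (ℝ × ℝ)) [SFinite ρ] [SFinite ν] :
    ∫⁻ w, ρ (Ici w.2 ×ˢ Iio w.1) ∂ν = ∫⁻ z, ν (Ioi z.2 ×ˢ Iic z.1) ∂ρ := by
  have hE : MeasurableSet {q : (ℝ × ℝ) × (ℝ × ℝ) | q.2 ∈ Ici q.1.2 ×ˢ Iio q.1.1} :=
    (measurableSet_le (by fun_prop) (by fun_prop)).inter
      (measurableSet_lt (by fun_prop) (by fun_prop))
  have hslice : ∀ z : ℝ × ℝ, Ioi z.2 ×ˢ Iic z.1 = {w | z ∈ Ici w.2 ×ˢ Iio w.1} :=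
    fun _ => ext fun _ => and_comm
  simp_rw [hslice]
  exact (Measure.prod_apply hE).symm.trans (Measure.prod_apply_symm hE)

theorem lintegral_posPart_rpow_le_of_measure_le {α β : Type*} [MeasurableSpace α]
    [MeasurableSpace β] {μ : Measure α} {μ' : Measure β} [SFinite μ] [SFinite μ']
    {g₁ g₂ : α → ℝ} {f₁ f₂ : β → ℝ} (hg₁ : AEMeasurable g₁ μ) (hg₂ : AEMeasurable g₂ μ)
    (hf₁ : AEMeasurable f₁ μ') (hf₂ : AEMeasurable f₂ μ')
    (h : ∀ s t, μ {u | t < g₁ u ∧ g₂ u ≤ s} ≤ μ' {u | t < f₁ u ∧ f₂ u ≤ s})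
    {p : ℝ} (hp : 1 ≤ p) :
    ∫⁻ u, ENNReal.ofReal (max (g₁ u - g₂ u) 0 ^ p) ∂μ
      ≤ ∫⁻ u, ENNReal.ofReal (max (f₁ u - f₂ u) 0 ^ p) ∂μ' := by
  obtain ⟨ρ, _, hρ⟩ := exists_measure_eq_posPart_rpow hp
  have hcost : Measurable fun w : ℝ × ℝ => ENNReal.ofReal (max (w.1 - w.2) 0 ^ p) := by fun_prop
  have hg := hg₁.prodMk hg₂
  have hf := hf₁.prodMk hf₂
  rw [← lintegral_map' hcost.aemeasurable hg, ← lintegral_map' hcost.aemeasurable hf]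
  simp_rw [← hρ]
  rw [lintegral_measure_Ici_prod_Iio_eq, lintegral_measure_Ici_prod_Iio_eq]
  refine lintegral_mono fun z => ?_
  rw [Measure.map_apply_of_aemeasurable hg (measurableSet_Ioi.prod measurableSet_Iic),
    Measure.map_apply_of_aemeasurable hf (measurableSet_Ioi.prod measurableSet_Iic)]
  exact h z.1 z.2

theorem ofReal_abs_sub_rpow {p : ℝ} (hp : 0 < p) (x y : ℝ) :
    ENNReal.ofReal (|x - y| ^ p)
      = ENNReal.ofReal (max (x - y) 0 ^ p) + ENNReal.ofReal (max (y - x) 0 ^ p) := by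
  rcases le_total y x with h | h
  · rw [abs_of_nonneg (by linarith), max_eq_left (by linarith), max_eq_right (by linarith),
      Real.zero_rpow hp.ne', ENNReal.ofReal_zero, add_zero]
  · rw [abs_of_nonpos (by linarith), max_eq_right (by linarith), max_eq_left (by linarith),
      Real.zero_rpow hp.ne', ENNReal.ofReal_zero, zero_add, neg_sub]

theorem lintegral_abs_sub_rpow_le_of_measure_le {α β : Type*} [MeasurableSpace α]
    [MeasurableSpace β] {μ : Measure α} {μ' : Measure β} [SFinite μ] [SFinite μ']
    {g₁ g₂ : α → ℝ} {f₁ f₂ : β → ℝ} (hg₁ : AEMeasurable g₁ μ) (hg₂ : AEMeasurable g₂ μ)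
    (hf₁ : AEMeasurable f₁ μ') (hf₂ : AEMeasurable f₂ μ')
    (h₁₂ : ∀ s t, μ {u | t < g₁ u ∧ g₂ u ≤ s} ≤ μ' {u | t < f₁ u ∧ f₂ u ≤ s})
    (h₂₁ : ∀ s t, μ {u | t < g₂ u ∧ g₁ u ≤ s} ≤ μ' {u | t < f₂ u ∧ f₁ u ≤ s})
    {p : ℝ} (hp : 1 ≤ p) :
    ∫⁻ u, ENNReal.ofReal (|g₁ u - g₂ u| ^ p) ∂μ ≤ ∫⁻ u, ENNReal.ofReal (|f₁ u - f₂ u| ^ p) ∂μ' := by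
  simp_rw [ofReal_abs_sub_rpow (by linarith : 0 < p)]
  rw [lintegral_add_left' (by fun_prop), lintegral_add_left' (by fun_prop)]
  exact add_le_add (lintegral_posPart_rpow_le_of_measure_le hg₁ hg₂ hf₁ hf₂ h₁₂ hp)
    (lintegral_posPart_rpow_le_of_measure_le hg₂ hg₁ hf₂ hf₁ h₂₁ hp)

section Rearrangement

variable {a b C : ℝ} {f : ℝ → ℝ}

theorem Psi_eq_measureReal (hf : Measurable f) (y : ℝ) :
    Psi a b f y = (volume.restrict (Ico a b)).real {v | f v ≤ y} := by
  rw [Psi, ← Measure.restrict_congr_set Ico_ae_eq_Icc,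
    setIntegral_indicator (measurableSet_le hf measurable_const), setIntegral_const, smul_eq_mul,
    mul_one, measureReal_restrict_apply (measurableSet_le hf measurable_const), inter_comm]

theorem Psi_mono (hf : Measurable f) : Monotone (Psi a b f) := fun y z hyz => by
  simp only [Psi_eq_measureReal hf]
  exact measureReal_mono fun v (hv : f v ≤ y) => hv.trans hyz

theorem exists_gt_Psi_le (hf : Measurable f) {s c : ℝ} (h : Psi a b f s < c) :
    ∃ y, s < y ∧ Psi a b f y ≤ c := by
  have hc : 0 ≤ c := (Psi_eq_measureReal hf s ▸ measureReal_nonneg).trans h.le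
  have hcont := tendsto_measure_biInter_gt (μ := volume.restrict (Ico a b))
    (s := fun r => {v | f v ≤ r}) (a := s)
    (fun r _ => (measurableSet_le hf measurable_const).nullMeasurableSet)
    (fun _ _ _ hij v (hv : f v ≤ _) => hv.trans hij) ⟨s + 1, by linarith, measure_ne_top _ _⟩
  have hinter : ⋂ r > s, {v | f v ≤ r} = {v | f v ≤ s} := by
    ext v
    simp only [mem_iInter, mem_ofPred_eq]
    exact ⟨fun hv => le_of_forall_gt_imp_ge_of_dense hv, fun hv r hr => hv.trans hr.le⟩
  rw [hinter] at hcont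
  have hlt : volume.restrict (Ico a b) {v | f v ≤ s} < ENNReal.ofReal c := by
    rwa [Psi_eq_measureReal hf, measureReal_def, ← ENNReal.ofReal_lt_ofReal_iff_of_nonneg
      ENNReal.toReal_nonneg, ENNReal.ofReal_toReal (measure_ne_top _ _)] at h
  obtain ⟨y, hy, hsy⟩ :=
    ((hcont.eventually_lt_const hlt).and self_mem_nhdsWithin).exists
  refine ⟨y, hsy, ?_⟩
  rw [Psi_eq_measureReal hf, measureReal_def]
  exact ENNReal.toReal_le_of_le_ofReal hc hy.le

theorem Psi_eq_zero_of_lt (hf : Measurable f) (hbdd : ∀ u ∈ Ico a b, |f u| ≤ C) {y : ℝ}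
    (hy : y < -C) : Psi a b f y = 0 := by
  have hempty : {v | f v ≤ y} ∩ Ico a b = ∅ := eq_empty_of_forall_notMem fun v hv => by
    linarith [hv.1.out, neg_abs_le (f v), hbdd v hv.2]
  rw [Psi_eq_measureReal hf, measureReal_restrict_apply (measurableSet_le hf measurable_const),
    hempty, measureReal_empty]

theorem Psi_eq_volume_real_Ico_of_le (hf : Measurable f) (hbdd : ∀ u ∈ Ico a b, |f u| ≤ C)
    {y : ℝ} (hy : C ≤ y) : Psi a b f y = volume.real (Ico a b) := by
  have hall : {v | f v ≤ y} ∩ Ico a b = Ico a b :=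
    inter_eq_right.mpr fun v hv => (le_abs_self _).trans ((hbdd v hv).trans hy)
  rw [Psi_eq_measureReal hf, measureReal_restrict_apply (measurableSet_le hf measurable_const),
    hall]

theorem nonempty_setOf_Psi_le (hf : Measurable f) (hbdd : ∀ u ∈ Ico a b, |f u| ≤ C)
    {u : ℝ} (hu : a ≤ u) : {y | Psi a b f y ≤ u - a}.Nonempty :=
  ⟨-C - 1, by
    simp only [mem_ofPred_eq, Psi_eq_zero_of_lt hf hbdd (by linarith : -C - 1 < -C)]
    linarith⟩

theorem bddAbove_setOf_Psi_le (hf : Measurable f) (hbdd : ∀ u ∈ Ico a b, |f u| ≤ C)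
    {u : ℝ} (hu : u < b) : BddAbove {y | Psi a b f y ≤ u - a} := by
  refine ⟨C, fun y (hy : Psi a b f y ≤ u - a) => le_of_not_gt fun hCy => ?_⟩
  rw [Psi_eq_volume_real_Ico_of_le hf hbdd hCy.le, Real.volume_real_Ico] at hy
  linarith [le_max_left (b - a) 0]

theorem Psi_le_of_lt_Phi (hf : Measurable f) (hbdd : ∀ u ∈ Ico a b, |f u| ≤ C)
    {u s : ℝ} (hu : u ∈ Ico a b) (h : s < Phi a b f u) : Psi a b f s ≤ u - a := by
  obtain ⟨y, hy, hsy⟩ := exists_lt_of_lt_csSup (nonempty_setOf_Psi_le hf hbdd hu.1) h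
  exact (Psi_mono hf hsy.le).trans hy

theorem lt_Phi_of_Psi_lt (hf : Measurable f) (hbdd : ∀ u ∈ Ico a b, |f u| ≤ C)
    {u s : ℝ} (hu : u ∈ Ico a b) (h : Psi a b f s < u - a) : s < Phi a b f u := by
  obtain ⟨y, hsy, hy⟩ := exists_gt_Psi_le hf h
  exact hsy.trans_le (le_csSup (bddAbove_setOf_Psi_le hf hbdd hu.2) hy)

theorem monotoneOn_Phi (hf : Measurable f) (hbdd : ∀ u ∈ Ico a b, |f u| ≤ C) :
    MonotoneOn (Phi a b f) (Ico a b) := fun u hu v hv huv =>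
  csSup_le_csSup (bddAbove_setOf_Psi_le hf hbdd hv.2) (nonempty_setOf_Psi_le hf hbdd hu.1)
    fun y (hy : Psi a b f y ≤ u - a) => show Psi a b f y ≤ v - a by linarith

theorem measure_lt_Phi_and_Phi_le {f₁ f₂ : ℝ → ℝ} (hf₁ : Measurable f₁) (hf₂ : Measurable f₂)
    (hbdd₁ : ∀ u ∈ Ico a b, |f₁ u| ≤ C) (hbdd₂ : ∀ u ∈ Ico a b, |f₂ u| ≤ C) (s t : ℝ) :
    volume.restrict (Ico a b) {u | t < Phi a b f₁ u ∧ Phi a b f₂ u ≤ s}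
      ≤ volume.restrict (Ico a b) {u | t < f₁ u ∧ f₂ u ≤ s} := by
  set μ := volume.restrict (Ico a b)
  have hlevel : ∀ {f : ℝ → ℝ} (r : ℝ), Measurable f →
      ENNReal.ofReal (Psi a b f r) = μ {v | f v ≤ r} :=
    fun r hf => by rw [Psi_eq_measureReal hf, ofReal_measureReal]
  calc μ {u | t < Phi a b f₁ u ∧ Phi a b f₂ u ≤ s}
      ≤ volume (Icc (a + Psi a b f₁ t) (a + Psi a b f₂ s)) := by
        rw [Measure.restrict_apply' measurableSet_Ico]
        refine measure_mono fun u ⟨⟨h₁, h₂⟩, hu⟩ => ⟨?_, ?_⟩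
        · linarith [Psi_le_of_lt_Phi hf₁ hbdd₁ hu h₁]
        · by_contra! hlt
          exact (lt_Phi_of_Psi_lt hf₂ hbdd₂ hu (by linarith)).not_ge h₂
    _ = μ {v | f₂ v ≤ s} - μ {v | f₁ v ≤ t} := by
        rw [Real.volume_Icc, ← hlevel s hf₂, ← hlevel t hf₁,
          ← ENNReal.ofReal_sub _ (Psi_eq_measureReal hf₁ t ▸ measureReal_nonneg)]
        ring_nf
    _ ≤ μ {u | t < f₁ u ∧ f₂ u ≤ s} := by
        rw [tsub_le_iff_right]
        refine (measure_mono fun v (hv : f₂ v ≤ s) => ?_).trans (measure_union_le _ _)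
        by_cases h₁ : f₁ v ≤ t
        · exact Or.inr h₁
        · exact Or.inl ⟨not_le.mp h₁, hv⟩

end Rearrangement

theorem rearrangement_Lp_contraction_general (a b : ℝ) (f₁ f₂ : ℝ → ℝ)
    (hf₁ : Measurable f₁) (hf₂ : Measurable f₂)
    (C : ℝ) (hbdd₁ : ∀ u ∈ Set.Icc a b, |f₁ u| ≤ C) (hbdd₂ : ∀ u ∈ Set.Icc a b, |f₂ u| ≤ C)
    (p : ℝ) (hp : 1 ≤ p) :
    ∫ u in Set.Icc a b, |Phi a b f₁ u - Phi a b f₂ u| ^ p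
      ≤ ∫ u in Set.Icc a b, |f₁ u - f₂ u| ^ p := by
  have hbdd₁' : ∀ u ∈ Ico a b, |f₁ u| ≤ C := fun u hu => hbdd₁ u (Ico_subset_Icc_self hu)
  have hbdd₂' : ∀ u ∈ Ico a b, |f₂ u| ≤ C := fun u hu => hbdd₂ u (Ico_subset_Icc_self hu)
  have hΦ₁ : AEMeasurable (Phi a b f₁) (volume.restrict (Ico a b)) :=
    aemeasurable_restrict_of_monotoneOn measurableSet_Ico (monotoneOn_Phi hf₁ hbdd₁')
  have hΦ₂ : AEMeasurable (Phi a b f₂) (volume.restrict (Ico a b)) :=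
    aemeasurable_restrict_of_monotoneOn measurableSet_Ico (monotoneOn_Phi hf₂ hbdd₂')
  have hlintegral := lintegral_abs_sub_rpow_le_of_measure_le hΦ₁ hΦ₂ hf₁.aemeasurable
    hf₂.aemeasurable (measure_lt_Phi_and_Phi_le hf₁ hf₂ hbdd₁' hbdd₂')
    (measure_lt_Phi_and_Phi_le hf₂ hf₁ hbdd₂' hbdd₁') hp
  have hint : Integrable (fun u => |f₁ u - f₂ u| ^ p) (volume.restrict (Ico a b)) := by
    refine .of_bound ((hf₁.sub hf₂).abs.pow_const p).aestronglyMeasurable ((2 * C) ^ p)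
      ((ae_restrict_iff' measurableSet_Ico).mpr (.of_forall fun u hu => ?_))
    rw [Real.norm_of_nonneg (by positivity)]
    refine Real.rpow_le_rpow (abs_nonneg _) ?_ (by linarith)
    linarith [abs_sub (f₁ u) (f₂ u), hbdd₁' u hu, hbdd₂' u hu]
  -- `Phi a b f b = sSup univ = 0` is a junk value, hence the switch to `Ico a b`.
  rw [← Measure.restrict_congr_set Ico_ae_eq_Icc,
    integral_eq_lintegral_of_nonneg_ae (f := fun u => |Phi a b f₁ u - Phi a b f₂ u| ^ p)
      (.of_forall fun _ => by positivity) ((hΦ₁.sub hΦ₂).abs.pow_const p).aestronglyMeasurable,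
    integral_eq_lintegral_of_nonneg_ae (.of_forall fun _ => by positivity) hint.1]
  exact ENNReal.toReal_mono hint.lintegral_lt_top.ne hlintegral

/-- The monotone rearrangement is an `L^p` contraction: for bounded measurable
`f₁, f₂` on `J = [a,b]` and `p ≥ 1`,
`∫_J |Φ(f₁) − Φ(f₂)|^p ≤ ∫_J |f₁ − f₂|^p`. -/
theorem rearrangement_Lp_contraction (a b : ℝ) (hab : a ≤ b) (f₁ f₂ : ℝ → ℝ)
    (hf₁ : Measurable f₁) (hf₂ : Measurable f₂)
    (C : ℝ) (hbdd₁ : ∀ u ∈ Set.Icc a b, |f₁ u| ≤ C) (hbdd₂ : ∀ u ∈ Set.Icc a b, |f₂ u| ≤ C)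
    (p : ℝ) (hp : 1 ≤ p) :
    ∫ u in Set.Icc a b, |Phi a b f₁ u - Phi a b f₂ u| ^ p
      ≤ ∫ u in Set.Icc a b, |f₁ u - f₂ u| ^ p :=
  rearrangement_Lp_contraction_general a b f₁ f₂ hf₁ hf₂ C hbdd₁ hbdd₂ p hp
end

section
/- If f : J → ℝ is nondecreasing and right-continuous on a bounded interval J, then its increasing rearrangement satisfies Φ(f) = f almost everywhere on J. -/
open MeasureTheory

/-!
For nondecreasing `f`, the sublevel set `{f ≤ y} ∩ [a, b]` is an initial segment of `[a, b]`.
If `y < f u` it lies in `[a, u)`, so `Ψ(f)(y) ≤ u - a`; if `y > f u`, right-continuity at `u < b`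
puts some `[a, w]` with `w > u` inside it, so `Ψ(f)(y) > u - a`. Hence `Φ(f)(u) = f u` for every
`u ∈ [a, b)`, which is almost all of `[a, b]`.
-/

section

variable {a b u y : ℝ} {f : ℝ → ℝ}

theorem MonotoneOn.ordConnected_Icc_inter_sublevel (hmono : MonotoneOn f (Set.Icc a b))
    (y : ℝ) : (Set.Icc a b ∩ {v | f v ≤ y}).OrdConnected := by
  refine ⟨?_⟩
  rintro x ⟨hxI, -⟩ z ⟨hzI, hz⟩ w hw
  have hwI : w ∈ Set.Icc a b := ⟨hxI.1.trans hw.1, hw.2.trans hzI.2⟩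
  exact ⟨hwI, (hmono hwI hzI hw.2).trans hz⟩

theorem Psi_eq_volume_real (hmono : MonotoneOn f (Set.Icc a b)) (y : ℝ) :
    Psi a b f y = volume.real (Set.Icc a b ∩ {v | f v ≤ y}) := by
  rw [Psi, ← integral_indicator measurableSet_Icc, Set.indicator_indicator]
  exact integral_indicator_one (hmono.ordConnected_Icc_inter_sublevel y).measurableSet

theorem Psi_le_of_lt (hmono : MonotoneOn f (Set.Icc a b)) (hu : u ∈ Set.Icc a b)
    (hy : y < f u) : Psi a b f y ≤ u - a := by
  have hsub : Set.Icc a b ∩ {v | f v ≤ y} ⊆ Set.Ico a u := by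
    rintro v ⟨hvI, hv⟩
    refine ⟨hvI.1, lt_of_not_ge fun huv => ?_⟩
    exact (hy.trans_le ((hmono hu hvI huv).trans hv)).false
  calc Psi a b f y = volume.real (Set.Icc a b ∩ {v | f v ≤ y}) := Psi_eq_volume_real hmono y
    _ ≤ volume.real (Set.Ico a u) := measureReal_mono hsub measure_Ico_lt_top.ne
    _ = u - a := Real.volume_real_Ico_of_le hu.1

theorem lt_Psi_of_gt (hmono : MonotoneOn f (Set.Icc a b)) (hu : u ∈ Set.Ico a b)
    (hrc : ContinuousWithinAt f (Set.Ici u) u) (hy : f u < y) : u - a < Psi a b f y := by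
  have hfy : ∀ᶠ w in nhdsWithin u (Set.Ioi u), f w < y :=
    nhdsWithin_mono u Set.Ioi_subset_Ici_self (hrc (Iio_mem_nhds hy))
  have hwb : ∀ᶠ w in nhdsWithin u (Set.Ioi u), w < b :=
    nhdsWithin_le_nhds (eventually_lt_nhds hu.2)
  obtain ⟨w, hfw, hwb, huw⟩ := (hfy.and (hwb.and self_mem_nhdsWithin)).exists
  have hwI : w ∈ Set.Icc a b := ⟨hu.1.trans huw.le, hwb.le⟩
  have hsub : Set.Icc a w ⊆ Set.Icc a b ∩ {v | f v ≤ y} := fun v hv =>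
    have hvI : v ∈ Set.Icc a b := ⟨hv.1, hv.2.trans hwb.le⟩
    ⟨hvI, ((hmono hvI hwI hv.2).trans_lt hfw).le⟩
  calc u - a < w - a := by linarith
    _ = volume.real (Set.Icc a w) := (Real.volume_real_Icc_of_le hwI.1).symm
    _ ≤ volume.real (Set.Icc a b ∩ {v | f v ≤ y}) :=
        measureReal_mono hsub (measure_mono Set.inter_subset_left |>.trans_lt measure_Icc_lt_top).ne
    _ = Psi a b f y := (Psi_eq_volume_real hmono y).symm

theorem Phi_eq_of_mem_Ico (hmono : MonotoneOn f (Set.Icc a b)) (hu : u ∈ Set.Ico a b)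
    (hrc : ContinuousWithinAt f (Set.Ici u) u) : Phi a b f u = f u := by
  have hu' : u ∈ Set.Icc a b := Set.Ico_subset_Icc_self hu
  have hne : {y | Psi a b f y ≤ u - a}.Nonempty :=
    ⟨f u - 1, Psi_le_of_lt hmono hu' (sub_one_lt _)⟩
  refine csSup_eq_of_forall_le_of_forall_lt_exists_gt hne
    (fun z hz => le_of_not_gt fun h => (lt_Psi_of_gt hmono hu hrc h).not_ge hz) fun z hz => ?_
  obtain ⟨z', hzz', hz'⟩ := exists_between hz
  exact ⟨z', Psi_le_of_lt hmono hu' hz', hzz'⟩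

end

theorem rearrangement_of_monotone_general (a b : ℝ) (f : ℝ → ℝ)
    (hmono : MonotoneOn f (Set.Icc a b))
    (hrc : ∀ x ∈ Set.Icc a b, ContinuousWithinAt f (Set.Ici x) x) :
    ∀ᵐ u ∂(volume.restrict (Set.Icc a b)), Phi a b f u = f u := by
  rw [← Measure.restrict_congr_set Ico_ae_eq_Icc]
  filter_upwards [ae_restrict_mem measurableSet_Ico] with u hu
  exact Phi_eq_of_mem_Ico hmono hu (hrc u (Set.Ico_subset_Icc_self hu))

/-- If `f` is nondecreasing and right-continuous on `J = [a,b]`, then its increasing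
rearrangement satisfies `Φ(f) = f` almost everywhere on `J`. -/
theorem rearrangement_of_monotone (a b : ℝ) (hab : a ≤ b) (f : ℝ → ℝ)
    (hmono : MonotoneOn f (Set.Icc a b))
    (hrc : ∀ x ∈ Set.Icc a b, ContinuousWithinAt f (Set.Ici x) x) :
    ∀ᵐ u ∂(volume.restrict (Set.Icc a b)), Phi a b f u = f u :=
  rearrangement_of_monotone_general a b f hmono hrc
end

section
/- Let H be a discrete distribution function supported on finitely many distinct points Y₁ < Y₂ < ... < Y_n with positive masses, decomposed as H = H₀ + H₁ + H₂ where H_k have jumps only at the points Y_i with δ_i = k for labels δ_i ∈ {0,1,2}. Define F_L(t−) = ∏_{[t,∞)} (1 − ΔH₂(s)/H(s)). Then F_L(t−) − H(t−) ≥ 0 for all t. -/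
open Finset

/-!
Writing `H(s) = H(s−) + ΔH(s)`, each factor `1 − ΔH(s)/H(s)` equals `H(s−)/H(s)`, so the product
of these factors over all jumps of `H` in `[t, ∞)` telescopes to `H(t−)/H(∞)`. As `H(∞) ≤ 1`,
this gives `H(t−) ≤ ∏_{[t,∞)} (1 − ΔH(s)/H(s))`. All factors lie in `[0, 1]`, so keeping only
those at jumps of `H₂` can only increase the product, which then is `F_L(t−)`.
-/

section CumulativeWeight

variable {ι : Type*} [LinearOrder ι]

noncomputable def cumWeight (s : Finset ι) (w : ι → ℝ) (j : ι) : ℝ :=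
  ∑ i ∈ s with i ≤ j, w i

lemma cumWeight_insert_of_lt (s : Finset ι) (w : ι → ℝ) {b j : ι} (hj : j < b) :
    cumWeight (insert b s) w j = cumWeight s w j := by
  simp [cumWeight, filter_insert, hj.not_ge]

lemma cumWeight_insert_of_forall_lt {s : Finset ι} (w : ι → ℝ) {b : ι} (hs : ∀ x ∈ s, x < b) :
    cumWeight (insert b s) w b = ∑ i ∈ insert b s, w i := by
  rw [cumWeight, filter_true_of_mem]
  rintro i hi
  rcases mem_insert.mp hi with rfl | hi
  exacts [le_rfl, (hs i hi).le]

lemma one_sub_div_cumWeight_mem_Icc {s : Finset ι} {w : ι → ℝ} (hw : ∀ i ∈ s, 0 ≤ w i)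
    {j : ι} (hj : j ∈ s) : 1 - w j / cumWeight s w j ∈ Set.Icc 0 1 := by
  have hle : w j ≤ cumWeight s w j :=
    single_le_sum (fun i hi => hw i (mem_filter.mp hi).1) (mem_filter.mpr ⟨hj, le_rfl⟩)
  have hj0 := hw j hj
  constructor
  · linarith [div_le_one_of_le₀ hle (hj0.trans hle)]
  · linarith [div_nonneg hj0 (hj0.trans hle)]

/-- The product-integral identity `H(t−) = H(∞) ∏_{[t,∞)} (1 − ΔH(s)/H(s))`, with the half-line
`[t, ∞)` generalised to an upper set `{i | p i}`. -/
theorem sum_mul_prod_one_sub_div_cumWeight (s : Finset ι) {w : ι → ℝ} (hw : ∀ i ∈ s, 0 < w i)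
    {p : ι → Prop} [DecidablePred p] (hp : Monotone p) :
    (∑ i ∈ s, w i) * ∏ i ∈ s with p i, (1 - w i / cumWeight s w i) =
      ∑ i ∈ s with ¬p i, w i := by
  induction s using Finset.induction_on_max with
  | empty => simp
  | insert b s hlt ih =>
    have hb : b ∉ s := fun h => (hlt b h).false
    have hcum : cumWeight (insert b s) w b = w b + ∑ i ∈ s, w i := by
      rw [cumWeight_insert_of_forall_lt w hlt, sum_insert hb]
    by_cases hpb : p b
    · have hpos : 0 < w b + ∑ i ∈ s, w i := add_pos_of_pos_of_nonneg
        (hw b (mem_insert_self b s)) (sum_nonneg fun i hi => (hw i (mem_insert_of_mem hi)).le)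
      have hjump : (w b + ∑ i ∈ s, w i) * (1 - w b / (w b + ∑ i ∈ s, w i)) = ∑ i ∈ s, w i := by
        field_simp
        ring
      have hfac : ∏ i ∈ s with p i, (1 - w i / cumWeight (insert b s) w i) =
          ∏ i ∈ s with p i, (1 - w i / cumWeight s w i) :=
        prod_congr rfl fun i hi => by
          rw [cumWeight_insert_of_lt s w (hlt i (mem_filter.mp hi).1)]
      rw [filter_insert, if_pos hpb, prod_insert (by simp [hb]), hfac, hcum, sum_insert hb,
        ← mul_assoc, hjump, ih fun i hi => hw i (mem_insert_of_mem hi), filter_insert,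
        if_neg (not_not.mpr hpb)]
    · have hnone : ∀ x ∈ insert b s, ¬p x := by
        rintro x hx
        rcases mem_insert.mp hx with rfl | hx
        exacts [hpb, fun h => hpb (hp (hlt x hx).le h)]
      rw [filter_false_of_mem hnone, prod_empty, mul_one, filter_true_of_mem hnone]

end CumulativeWeight

/-- Discrete setup of Lemma 2.1: `Y₁ < ... < Yₙ` distinct points with positive masses
`wᵢ` summing to at most `1`, labels `δᵢ ∈ {0,1,2}`,
`H(t) = Σᵢ wᵢ 1{Yᵢ ≤ t}`, `H(t−) = Σᵢ wᵢ 1{Yᵢ < t}`, and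
`F_L(t−) = ∏_{i : Yᵢ ≥ t, δᵢ = 2} (1 − wᵢ / H(Yᵢ))`.
Then `F_L(t−) − H(t−) ≥ 0` for all `t`. -/
theorem FL_minus_H_nonneg (n : ℕ) (Y : Fin n → ℝ) (hY : StrictMono Y)
    (w : Fin n → ℝ) (hw : ∀ i, 0 < w i) (hw1 : ∑ i, w i ≤ 1)
    (δ : Fin n → Fin 3)
    (H Hminus FLminus : ℝ → ℝ)
    (hH : ∀ t, H t = ∑ i ∈ univ.filter (fun i => Y i ≤ t), w i)
    (hHm : ∀ t, Hminus t = ∑ i ∈ univ.filter (fun i => Y i < t), w i)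
    (hFL : ∀ t, FLminus t = ∏ i ∈ univ.filter (fun i => t ≤ Y i ∧ δ i = 2),
        (1 - w i / H (Y i))) :
    ∀ t : ℝ, 0 ≤ FLminus t - Hminus t := by
  intro t
  have hHY : ∀ i, H (Y i) = cumWeight univ w i := fun i => by
    simp only [hH, cumWeight, hY.le_iff_le]
  have hfac : ∀ i, 1 - w i / cumWeight univ w i ∈ Set.Icc 0 1 := fun i =>
    one_sub_div_cumWeight_mem_Icc (fun j _ => (hw j).le) (mem_univ i)
  have hidentity := sum_mul_prod_one_sub_div_cumWeight univ (fun i _ => hw i)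
    (p := fun i => t ≤ Y i) fun _ _ hij hi => hi.trans (hY.monotone hij)
  simp only [not_le] at hidentity
  rw [hHm, hFL, sub_nonneg]
  calc ∑ i with Y i < t, w i
      = (∑ i, w i) * ∏ i with t ≤ Y i, (1 - w i / cumWeight univ w i) := hidentity.symm
    _ ≤ ∏ i with t ≤ Y i, (1 - w i / cumWeight univ w i) :=
        mul_le_of_le_one_left (prod_nonneg fun i _ => (hfac i).1) hw1
    _ ≤ ∏ i with t ≤ Y i ∧ δ i = 2, (1 - w i / cumWeight univ w i) :=
        prod_le_prod_of_subset_of_le_one (fun i => by simp +contextual)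
          (fun i _ => (hfac i).1) fun i _ _ => (hfac i).2
    _ = ∏ i with t ≤ Y i ∧ δ i = 2, (1 - w i / H (Y i)) := by simp only [hHY]
end

section
/- In the discrete setup of Lemma 2.1, if δ_k = 0 for some index k ≥ 2 (with Y₁ < ... < Y_n distinct), then F_L(Y_k−) − H(Y_k−) ≥ ΔH(Y_k), i.e. the jump of the hazard estimate Λ_T⁻(dt) = H₀(dt)/(F_L(t−) − H(t−)) at Y_k is at most 1. -/
open Finset

/-!
With `Gᵢ = H(Yᵢ)`, the factor `1 - wᵢ / Gᵢ` equals `Gᵢ₋₁ / Gᵢ`, so the product of these factors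
over all `i > k` telescopes to `Gₖ / Gₙ ≥ Gₖ`. All factors lie in `[0, 1]`, so dropping some of
them only increases the product; since `δₖ ≠ 2`, the product defining `F_L(Yₖ−)` runs over a
subset of `{i > k}`. Hence `F_L(Yₖ−) ≥ H(Yₖ) = H(Yₖ−) + wₖ`.
-/

section CumulativeSum

variable {ι : Type*} [LinearOrder ι] [LocallyFiniteOrderBot ι] {w : ι → ℝ}

lemma one_sub_div_cumsum_mul_cumsum (hw : ∀ i, 0 ≤ w i) (i : ι) :
    (1 - w i / ∑ j ∈ Iic i, w j) * ∑ j ∈ Iic i, w j = ∑ j ∈ Iio i, w j := by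
  have hS : 0 ≤ ∑ j ∈ Iio i, w j := sum_nonneg fun j _ => hw j
  rw [← Iio_insert, sum_insert notMem_Iio_self, sub_mul, one_mul,
    div_mul_cancel_of_imp fun h => by linarith [hw i]]
  ring

lemma one_sub_div_cumsum_mem_Icc (hw : ∀ i, 0 ≤ w i) (i : ι) :
    1 - w i / ∑ j ∈ Iic i, w j ∈ Set.Icc (0 : ℝ) 1 := by
  have hwG : w i ≤ ∑ j ∈ Iic i, w j :=
    single_le_sum (fun j _ => hw j) (mem_Iic.2 le_rfl)
  constructor
  · linarith [div_le_one_of_le₀ hwG ((hw i).trans hwG)]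
  · linarith [div_nonneg (hw i) ((hw i).trans hwG)]

variable [Fintype ι] [LocallyFiniteOrderTop ι] [SuccOrder ι]

lemma cumsum_eq_prod_mul_sum (hw : ∀ i, 0 ≤ w i) (k : ι) :
    ∑ j ∈ Iic k, w j = (∏ i ∈ Ioi k, (1 - w i / ∑ j ∈ Iic i, w j)) * ∑ j, w j := by
  induction k using WellFoundedGT.induction with
  | _ k ih =>
  by_cases hk : IsMax k
  · rw [hk.finsetIoi_eq, prod_empty, one_mul]
    congr 1
    exact eq_univ_of_forall fun j => mem_Iic.2 (hk.isTop j)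
  · rw [← Ici_succ_eq_Ioi_of_not_isMax hk, ← Ioi_insert, prod_insert notMem_Ioi_self, mul_assoc,
      ← ih _ (Order.lt_succ_of_not_isMax hk), one_sub_div_cumsum_mul_cumsum hw,
      Iio_succ_eq_Iic_of_not_isMax hk]

lemma cumsum_le_prod_of_subset (hw : ∀ i, 0 ≤ w i) (hw1 : ∑ i, w i ≤ 1) {k : ι}
    {s : Finset ι} (hs : s ⊆ Ioi k) :
    ∑ j ∈ Iic k, w j ≤ ∏ i ∈ s, (1 - w i / ∑ j ∈ Iic i, w j) := by
  have hf := one_sub_div_cumsum_mem_Icc hw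
  calc ∑ j ∈ Iic k, w j
      = (∏ i ∈ Ioi k, (1 - w i / ∑ j ∈ Iic i, w j)) * ∑ j, w j := cumsum_eq_prod_mul_sum hw k
    _ ≤ ∏ i ∈ Ioi k, (1 - w i / ∑ j ∈ Iic i, w j) :=
        mul_le_of_le_one_right (prod_nonneg fun i _ => (hf i).1) hw1
    _ ≤ ∏ i ∈ s, (1 - w i / ∑ j ∈ Iic i, w j) :=
        prod_le_prod_of_subset_of_le_one hs (fun i _ => (hf i).1) fun i _ _ => (hf i).2

end CumulativeSum

theorem hazard_jump_le_one_general (n : ℕ) (Y : Fin n → ℝ) (hY : StrictMono Y)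
    (w : Fin n → ℝ) (hw : ∀ i, 0 < w i) (hw1 : ∑ i, w i ≤ 1)
    (δ : Fin n → Fin 3)
    (H Hminus FLminus : ℝ → ℝ)
    (hH : ∀ t, H t = ∑ i ∈ univ.filter (fun i => Y i ≤ t), w i)
    (hHm : ∀ t, Hminus t = ∑ i ∈ univ.filter (fun i => Y i < t), w i)
    (hFL : ∀ t, FLminus t = ∏ i ∈ univ.filter (fun i => t ≤ Y i ∧ δ i = 2),
        (1 - w i / H (Y i)))
    (k : Fin n) (hδk : δ k = 0) :
    w k ≤ FLminus (Y k) - Hminus (Y k) := by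
  have hH_Y : ∀ i, H (Y i) = ∑ j ∈ Iic i, w j := fun i => by
    rw [hH]; congr 1; ext j; simp [hY.le_iff_le]
  have hHm_Y : Hminus (Y k) = ∑ j ∈ Iio k, w j := by
    rw [hHm]; congr 1; ext j; simp [hY.lt_iff_lt]
  have hsub : univ.filter (fun i => Y k ≤ Y i ∧ δ i = 2) ⊆ Ioi k := fun i hi => by
    obtain ⟨hki, hδi⟩ := (mem_filter.1 hi).2
    exact mem_Ioi.2 <| (hY.le_iff_le.1 hki).lt_of_ne (by rintro rfl; simp [hδk] at hδi)
  have hbound := cumsum_le_prod_of_subset (fun i => (hw i).le) hw1 hsub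
  rw [← Iio_insert, sum_insert notMem_Iio_self] at hbound
  simp only [← hH_Y, ← hFL, ← hHm_Y] at hbound
  linarith

/-- Discrete setup of Lemma 2.1: if `δₖ = 0` for some index `k ≥ 2` (i.e. `k` is not the
smallest observation), then `F_L(Yₖ−) − H(Yₖ−) ≥ ΔH(Yₖ) = wₖ`, i.e. the jump of the
hazard estimate `Λ_T⁻(dt) = H₀(dt)/(F_L(t−) − H(t−))` at `Yₖ` is at most `1`. -/
theorem hazard_jump_le_one (n : ℕ) (Y : Fin n → ℝ) (hY : StrictMono Y)
    (w : Fin n → ℝ) (hw : ∀ i, 0 < w i) (hw1 : ∑ i, w i ≤ 1)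
    (δ : Fin n → Fin 3)
    (H Hminus FLminus : ℝ → ℝ)
    (hH : ∀ t, H t = ∑ i ∈ univ.filter (fun i => Y i ≤ t), w i)
    (hHm : ∀ t, Hminus t = ∑ i ∈ univ.filter (fun i => Y i < t), w i)
    (hFL : ∀ t, FLminus t = ∏ i ∈ univ.filter (fun i => t ≤ Y i ∧ δ i = 2),
        (1 - w i / H (Y i)))
    (k : Fin n) (hk : 1 ≤ (k : ℕ)) (hδk : δ k = 0) :
    w k ≤ FLminus (Y k) - Hminus (Y k) :=
  hazard_jump_le_one_general n Y hY w hw hw1 δ H Hminus FLminus hH hHm hFL k hδk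
end

section
/- Under the discrete setup of Lemma 2.1 with distinct observation values, the function Λ_T,n⁻(dt) := H₀,n(dt)/(F̃_L,n(t−) − H_n(t−)) is nonnegative, nondecreasing (as a cumulative function) and has all jumps of size at most one. -/
/-!
Write `cᵢ = ∑_{k ≤ i} wₖ`. A factor of `F̃_L,n(Yᵢ−)` is `1 - wₖ / cₖ = (cₖ - wₖ) / cₖ`, and
`cᵢ ≤ cₖ - wₖ` for `k > i`. Peeling the factors off from the smallest index upwards, and using
`cₖ ≤ 1` for the last one, gives `F̃_L,n(Yᵢ−) ≥ cᵢ = Hₙ(Yᵢ−) + wᵢ`. So every denominator of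
`Λ_{T,n}⁻` is at least its numerator `wᵢ > 0`: each jump lies in `[0, 1]`, and a sum of such
jumps over `{Yᵢ ≤ t}` is nonnegative and nondecreasing in `t`.
-/

open Finset

section PartialSums

variable {ι : Type*} [LinearOrder ι] [LocallyFiniteOrderBot ι]

lemma sum_Iic_eq_sum_Iio_add (w : ι → ℝ) (i : ι) :
    ∑ k ∈ Iic i, w k = ∑ k ∈ Iio i, w k + w i := by
  rw [← Iio_insert, sum_insert (by simp), add_comm]

lemma sum_Iic_le_sum_Iio_of_lt {w : ι → ℝ} (hw : ∀ k, 0 ≤ w k) {j i : ι} (hji : j < i) :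
    ∑ k ∈ Iic j, w k ≤ ∑ k ∈ Iio i, w k :=
  sum_le_sum_of_subset_of_nonneg (fun _ hk => mem_Iio.2 ((mem_Iic.1 hk).trans_lt hji))
    fun k _ _ => hw k

lemma one_sub_div_sum_Iic {w : ι → ℝ} {i : ι} (hi : ∑ k ∈ Iic i, w k ≠ 0) :
    1 - w i / ∑ k ∈ Iic i, w k = (∑ k ∈ Iio i, w k) / ∑ k ∈ Iic i, w k := by
  rw [eq_div_iff hi, sub_mul, div_mul_cancel₀ _ hi, one_mul, sum_Iic_eq_sum_Iio_add,
    add_sub_cancel_right]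

lemma sum_Iic_le_prod_one_sub_div {w : ι → ℝ} (hw : ∀ k, 0 < w k)
    (hw1 : ∀ k, ∑ l ∈ Iic k, w l ≤ 1) (S : Finset ι) {j : ι} (hS : ∀ i ∈ S, j < i) :
    ∑ k ∈ Iic j, w k ≤ ∏ i ∈ S, (1 - w i / ∑ k ∈ Iic i, w k) := by
  induction S using Finset.induction_on_min generalizing j with
  | empty => simpa using hw1 j
  | insert a s ha ih =>
    have hca : 0 < ∑ k ∈ Iic a, w k := sum_pos (fun k _ => hw k) nonempty_Iic
    have hfactor := one_sub_div_sum_Iic (w := w) hca.ne'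
    rw [prod_insert fun h => lt_irrefl a (ha a h)]
    calc ∑ k ∈ Iic j, w k
        ≤ ∑ k ∈ Iio a, w k :=
          sum_Iic_le_sum_Iio_of_lt (fun k => (hw k).le) (hS a (mem_insert_self a s))
      _ = (1 - w a / ∑ k ∈ Iic a, w k) * ∑ k ∈ Iic a, w k := by
          rw [hfactor, div_mul_cancel₀ _ hca.ne']
      _ ≤ (1 - w a / ∑ k ∈ Iic a, w k) * ∏ i ∈ s, (1 - w i / ∑ k ∈ Iic i, w k) := by
          gcongr
          · rw [hfactor]
            exact div_nonneg (sum_nonneg fun k _ => (hw k).le) hca.le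
          · exact ih ha

end PartialSums

/-- Lemma 2.1 of the paper (discrete setup with distinct observation values):
the function `Λ_{T,n}⁻(dt) = H₀ₙ(dt)/(F̃_{L,n}(t−) − Hₙ(t−))`, i.e. the cumulative hazard
`Λ(t) = Σ_{Yᵢ ≤ t, δᵢ = 0} wᵢ/(F̃_{L,n}(Yᵢ−) − Hₙ(Yᵢ−))`, is nonnegative, nondecreasing,
and has all jumps of size at most one (with the convention `0/0 = 0`, which is the
built-in convention for division in Lean). -/
theorem hazard_estimate_properties (n : ℕ) (Y : Fin n → ℝ) (hY : StrictMono Y)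
    (w : Fin n → ℝ) (hw : ∀ i, 0 < w i) (hw1 : ∑ i, w i = 1)
    (δ : Fin n → Fin 3)
    (H Hminus FLminus Λ : ℝ → ℝ)
    (hH : ∀ t, H t = ∑ i ∈ univ.filter (fun i => Y i ≤ t), w i)
    (hHm : ∀ t, Hminus t = ∑ i ∈ univ.filter (fun i => Y i < t), w i)
    (hFL : ∀ t, FLminus t = ∏ i ∈ univ.filter (fun i => t ≤ Y i ∧ δ i = 2),
        (1 - w i / H (Y i)))
    (hΛ : ∀ t, Λ t = ∑ i ∈ univ.filter (fun i => Y i ≤ t ∧ δ i = 0),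
        w i / (FLminus (Y i) - Hminus (Y i))) :
    (∀ t, 0 ≤ Λ t) ∧ Monotone Λ ∧
      (∀ i : Fin n, δ i = 0 → w i / (FLminus (Y i) - Hminus (Y i)) ≤ 1) := by
  have hHY : ∀ i, H (Y i) = ∑ k ∈ Iic i, w k := fun i => by
    rw [hH]; congr 1; ext k; simp [hY.le_iff_le]
  have hHmY : ∀ i, Hminus (Y i) = ∑ k ∈ Iio i, w k := fun i => by
    rw [hHm]; congr 1; ext k; simp [hY.lt_iff_lt]
  have hw1' : ∀ k, ∑ l ∈ Iic k, w l ≤ 1 := fun k =>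
    hw1 ▸ sum_le_univ_sum_of_nonneg fun l => (hw l).le
  have hden : ∀ i, δ i = 0 → w i ≤ FLminus (Y i) - Hminus (Y i) := by
    intro i hi
    have hafter : ∀ k ∈ univ.filter (fun k => Y i ≤ Y k ∧ δ k = 2), i < k := by
      intro k hk
      obtain ⟨hik, hk2⟩ := (mem_filter.1 hk).2
      exact lt_of_le_of_ne (hY.le_iff_le.1 hik) fun h => by simp [h ▸ hi] at hk2
    have hprod := sum_Iic_le_prod_one_sub_div hw hw1' _ hafter
    rw [hFL, hHmY]
    simp only [hHY]
    linarith [sum_Iic_eq_sum_Iio_add w i, hprod]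
  have hjump : ∀ i, δ i = 0 → 0 ≤ w i / (FLminus (Y i) - Hminus (Y i)) := fun i hi =>
    div_nonneg (hw i).le ((hw i).le.trans (hden i hi))
  refine ⟨fun t => ?_, fun s t hst => ?_,
    fun i hi => div_le_one_of_le₀ (hden i hi) ((hw i).le.trans (hden i hi))⟩
  · rw [hΛ]
    exact sum_nonneg fun i hi => hjump i (mem_filter.1 hi).2.2
  · rw [hΛ, hΛ]
    exact sum_le_sum_of_subset_of_nonneg
      (monotone_filter_right _ fun _ _ hi => ⟨hi.1.trans hst, hi.2⟩)
      fun i hi _ => hjump i (mem_filter.1 hi).2.2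
end
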